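/- Let X and Y be independent exponentially distributed random variables with means a > 0 and b > 0, and let R > 0. Then P(Y < X < 2^R·(1+Y) − 1) = a/(a+b) − (a/(a + 2^R·b)) · exp(−(2^R − 1)/a). -/

import Mathlib

/-!
Given `Y = y ≥ 0`, the event is `X ∈ (y, 2^R y + (2^R - 1))`, whose probability is
`e^{-y/a} - e^{-(2^R - 1)/a} e^{-2^R y/a}`. Integrating against the law of `Y` turns each term into
a Laplace transform of the exponential law, `E[e^{-tY}] = s / (s + t)` for rate `s`, which
holds because `s e^{-sy} e^{-ty}` is `s / (s + t)` times the exponential density of rate `s + t`.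
-/

open MeasureTheory ProbabilityTheory Real Set ENNReal

instance nullSingletonClass_expMeasure (r : ℝ) : NullSingletonClass (expMeasure r) :=
  nullSingletonClass_withDensity _

lemma ae_nonneg_expMeasure (r : ℝ) : ∀ᵐ x ∂expMeasure r, 0 ≤ x := by
  simp only [ae_iff, not_le]
  exact (withDensity_apply _ measurableSet_Iio).trans (lintegral_exponentialPDF_of_nonpos le_rfl)

lemma expMeasure_Ioi {r x : ℝ} (hr : 0 < r) (hx : 0 ≤ x) :
    expMeasure r (Ioi x) = ENNReal.ofReal (exp (-(r * x))) := by
  have := isProbabilityMeasure_expMeasure hr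
  have hexp : exp (-(r * x)) ≤ 1 := exp_le_one_iff.2 (by nlinarith)
  rw [← compl_Iic, prob_compl_eq_one_sub measurableSet_Iic, ← ofReal_cdf, cdf_expMeasure_eq hr,
    if_pos hx, ← ENNReal.ofReal_one, ← ENNReal.ofReal_sub _ (sub_nonneg.2 hexp),
    _root_.sub_sub_cancel]

lemma expMeasure_Ioo {r l u : ℝ} (hr : 0 < r) (hl : 0 ≤ l) (hlu : l ≤ u) :
    expMeasure r (Ioo l u)
      = ENNReal.ofReal (exp (-(r * l))) - ENNReal.ofReal (exp (-(r * u))) := by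
  have := isProbabilityMeasure_expMeasure hr
  rw [measure_congr Ioo_ae_eq_Ioc, ← Ioi_sdiff_Ioi,
    measure_sdiff (Ioi_subset_Ioi hlu) measurableSet_Ioi.nullMeasurableSet (measure_ne_top _ _),
    expMeasure_Ioi hr hl, expMeasure_Ioi hr (hl.trans hlu)]

lemma measurable_exponentialPDF (r : ℝ) : Measurable (exponentialPDF r) :=
  (measurable_exponentialPDFReal r).ennreal_ofReal

lemma exponentialPDF_mul_exp_neg {s t : ℝ} (hs : 0 < s) (hst : 0 < s + t) (x : ℝ) :
    exponentialPDF s x * ENNReal.ofReal (exp (-(t * x)))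
      = ENNReal.ofReal (s / (s + t)) * exponentialPDF (s + t) x := by
  rcases lt_or_ge x 0 with hx | hx
  · simp [exponentialPDF_of_neg hx]
  · rw [exponentialPDF_of_nonneg hx, exponentialPDF_of_nonneg hx,
      ← ENNReal.ofReal_mul (by positivity), ← ENNReal.ofReal_mul (by positivity)]
    congr 1
    rw [mul_assoc, ← exp_add]
    field_simp
    ring_nf

lemma lintegral_exp_neg_mul_expMeasure {s t : ℝ} (hs : 0 < s) (hst : 0 < s + t) :
    ∫⁻ x, ENNReal.ofReal (exp (-(t * x))) ∂expMeasure s = ENNReal.ofReal (s / (s + t)) := by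
  change ∫⁻ x, _ ∂volume.withDensity (exponentialPDF s) = _
  rw [lintegral_withDensity_eq_lintegral_mul _ (measurable_exponentialPDF s) (by fun_prop)]
  simp only [Pi.mul_apply, exponentialPDF_mul_exp_neg hs hst]
  rw [lintegral_const_mul _ (measurable_exponentialPDF _),
    lintegral_exponentialPDF_eq_one hst, mul_one]

lemma lintegral_expMeasure_Ioo_affine {r s c d : ℝ} (hr : 0 < r) (hs : 0 < s) (hc : 1 ≤ c)
    (hd : 0 ≤ d) :
    ∫⁻ x, expMeasure r (Ioo x (c * x + d)) ∂expMeasure s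
      = ENNReal.ofReal (s / (s + r) - exp (-(r * d)) * (s / (s + r * c))) := by
  set f : ℝ → ℝ≥0∞ := fun x ↦ ENNReal.ofReal (exp (-(r * x)))
  set g : ℝ → ℝ≥0∞ := fun x ↦ ENNReal.ofReal (exp (-(r * d)) * exp (-(r * c * x)))
  have hg_eq : ∀ x, exp (-(r * (c * x + d))) = exp (-(r * d)) * exp (-(r * c * x)) := fun x ↦ by
    rw [← exp_add]; ring_nf
  have hslice : ∀ᵐ x ∂expMeasure s, expMeasure r (Ioo x (c * x + d)) = f x - g x := by
    filter_upwards [ae_nonneg_expMeasure s] with x hx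
    rw [expMeasure_Ioo hr hx (by nlinarith), hg_eq]
  have hgf : g ≤ᵐ[expMeasure s] f := by
    filter_upwards [ae_nonneg_expMeasure s] with x hx
    refine ENNReal.ofReal_le_ofReal ?_
    rw [← hg_eq]
    exact exp_le_exp.2 (neg_le_neg (mul_le_mul_of_nonneg_left (by nlinarith) hr.le))
  have hf : ∫⁻ x, f x ∂expMeasure s = ENNReal.ofReal (s / (s + r)) :=
    lintegral_exp_neg_mul_expMeasure hs (by positivity)
  have hg :
      ∫⁻ x, g x ∂expMeasure s = ENNReal.ofReal (exp (-(r * d)) * (s / (s + r * c))) := by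
    simp only [g, ENNReal.ofReal_mul (exp_pos _).le]
    rw [lintegral_const_mul _ (by fun_prop), lintegral_exp_neg_mul_expMeasure hs (by positivity)]
  rw [lintegral_congr_ae hslice, lintegral_sub (by fun_prop) (hg ▸ ofReal_ne_top) hgf, hf, hg,
    ENNReal.ofReal_sub _ (by positivity)]

lemma ProbabilityTheory.IndepFun.measure_prodMk_mem {Ω α β : Type*} [MeasurableSpace Ω]
    [MeasurableSpace α] [MeasurableSpace β] {μ : Measure Ω} [IsFiniteMeasure μ]
    {X : Ω → α} {Y : Ω → β}
    (hX : AEMeasurable X μ) (hY : AEMeasurable Y μ) (hXY : IndepFun X Y μ) {S : Set (α × β)}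
    (hS : MeasurableSet S) :
    μ {ω | (X ω, Y ω) ∈ S} = ∫⁻ x, μ.map Y (Prod.mk x ⁻¹' S) ∂μ.map X := by
  rw [← Measure.prod_apply hS, ← hXY.map_prod_eq_prod_map_map hX hY,
    Measure.map_apply_of_aemeasurable (hX.prodMk hY) hS]
  rfl

theorem prob_between_general
    {Ω : Type*} [MeasureSpace Ω] [IsProbabilityMeasure (ℙ : Measure Ω)]
    (X Y : Ω → ℝ) (a b R : ℝ) (ha : 0 < a) (hb : 0 < b) (hR : 0 < R)
    (hindep : IndepFun X Y ℙ)
    (hX : Measure.map X ℙ = expMeasure (1 / a))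
    (hY : Measure.map Y ℙ = expMeasure (1 / b)) :
    ℙ {ω | Y ω < X ω ∧ X ω < 2 ^ R * (1 + Y ω) - 1}
      = ENNReal.ofReal
          (a / (a + b) - a / (a + 2 ^ R * b) * Real.exp (-(2 ^ R - 1) / a)) := by
  have hXm : AEMeasurable X ℙ := .of_map_ne_zero <| hX ▸
    (isProbabilityMeasure_expMeasure (one_div_pos.2 ha)).ne_zero
  have hYm : AEMeasurable Y ℙ := .of_map_ne_zero <| hY ▸
    (isProbabilityMeasure_expMeasure (one_div_pos.2 hb)).ne_zero
  have hc : 1 ≤ (2 : ℝ) ^ R := one_le_rpow one_le_two hR.le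
  have hS : MeasurableSet {p : ℝ × ℝ | p.1 < p.2 ∧ p.2 < 2 ^ R * p.1 + (2 ^ R - 1)} := by
    measurability
  calc ℙ {ω | Y ω < X ω ∧ X ω < 2 ^ R * (1 + Y ω) - 1}
      = ∫⁻ y, expMeasure (1 / a) (Ioo y (2 ^ R * y + (2 ^ R - 1))) ∂expMeasure (1 / b) := by
        rw [← hX, ← hY]
        refine (congrArg ℙ ?_).trans (hindep.symm.measure_prodMk_mem hYm hXm hS)
        ext ω
        simp only [mem_ofPred_eq]
        ring_nf
    _ = _ := by
        rw [lintegral_expMeasure_Ioo_affine (by positivity) (by positivity) hc (by linarith)]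
        congr 1
        field_simp

/-- Key step in the outage probability computation: for independent exponential
random variables `X` (mean `a`) and `Y` (mean `b`) and `R > 0`,
`P(Y < X < 2^R (1+Y) - 1) = a/(a+b) - (a/(a + 2^R b)) exp(-(2^R - 1)/a)`. -/
theorem prob_between
    {Ω : Type*} [MeasureSpace Ω] [IsProbabilityMeasure (ℙ : Measure Ω)]
    (X Y : Ω → ℝ) (a b R : ℝ) (ha : 0 < a) (hb : 0 < b) (hR : 0 < R)
    (hXm : Measurable X) (hYm : Measurable Y)
    (hindep : IndepFun X Y ℙ)
    (hX : Measure.map X ℙ = expMeasure (1 / a))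
    (hY : Measure.map Y ℙ = expMeasure (1 / b)) :
    ℙ {ω | Y ω < X ω ∧ X ω < 2 ^ R * (1 + Y ω) - 1}
      = ENNReal.ofReal
          (a / (a + b) - a / (a + 2 ^ R * b) * Real.exp (-(2 ^ R - 1) / a)) :=
  prob_between_general X Y a b R ha hb hR hindep hX hY
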